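/- For n even, if v ∈ ℝ^n, then the subsequences B^{2m}·v and B^{2m+1}·v each converge as m → ∞, and their limits are constant on even indices and constant on odd indices. -/

import Mathlib

/-!
`B` is symmetric and doubly stochastic, so its eigenvalues lie in `[-1, 1]` and those of `B²`
in `[0, 1]`. Diagonalising, `B^(2m) = (B²)^m` converges to the orthogonal projection `P` onto the
`1`-eigenspace of `B²`, hence `B^(2m) v → P v` and `B^(2m+1) v → B P v`. Both limits are fixed by
`B²`, i.e. satisfy `x(i+2) + x(i-2) = 2 x(i)`. Along the cycle `i, i+2, i+4, …` such an `x` has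
constant increments, and since the cycle closes up, the increments vanish: `x` is `2`-periodic.
-/

open Matrix

/-- The n-gon stealing matrix over ℝ: B(i,j) = 1/2 if j = i±1 (mod n), 0 otherwise. -/
noncomputable def ngonBR (n : ℕ) [NeZero n] : Matrix (ZMod n) (ZMod n) ℝ :=
  Matrix.of fun i j => if j = i + 1 ∨ j = i - 1 then (1/2 : ℝ) else 0

open Filter Topology

theorem exists_tendsto_sq_pow_of_abs_le_one {x : ℝ} (hx : |x| ≤ 1) :
    ∃ c, Tendsto (fun m : ℕ => (x ^ 2) ^ m) atTop (𝓝 c) := by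
  rcases (sq_le_one_iff_abs_le_one x).mpr hx |>.eq_or_lt with h | h
  · exact ⟨1, by simp [h]⟩
  · exact ⟨0, tendsto_pow_atTop_nhds_zero_of_lt_one (sq_nonneg x) h⟩

theorem mul_eq_of_tendsto_pow {M : Type*} [Monoid M] [TopologicalSpace M] [T2Space M]
    [ContinuousMul M] {a p : M} (h : Tendsto (fun m : ℕ => a ^ m) atTop (𝓝 p)) : a * p = p :=
  tendsto_nhds_unique (h.const_mul a) <| by
    simpa only [Function.comp_def, pow_succ'] using h.comp (tendsto_add_atTop_nat 1)

theorem Function.Periodic.of_add_add_sub_eq_two_mul {G K : Type*} [AddCommGroup G] [Field K]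
    [CharZero K] {x : G → K} {a : G} {N : ℕ} (hN : N ≠ 0) (ha : N • a = 0)
    (h : ∀ i, x (i + a) + x (i - a) = 2 * x i) : Function.Periodic x a := by
  set d : G → K := fun i => x (i + a) - x i
  have hd : Function.Periodic d a := fun i => by
    have := h (i + a)
    simp only [d, add_sub_cancel_right] at this ⊢
    linear_combination this
  have hx (k : ℕ) : ∀ i, x (i + k • a) = x i + k * d i := by
    induction k with
    | zero => simp
    | succ k ih =>
      intro i
      have hstep : x (i + k • a + a) = x (i + k • a) + d (i + k • a) := by simp [d]
      rw [succ_nsmul, ← add_assoc, hstep, ih, hd.nsmul k, Nat.cast_succ]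
      ring
  intro i
  have hdi : (N : K) * d i = 0 := by simpa [ha] using hx N i
  exact sub_eq_zero.mp <| (mul_eq_zero.mp hdi).resolve_left (Nat.cast_ne_zero.mpr hN)

theorem ZMod.eq_of_periodic_two {n : ℕ} [NeZero n] {α : Type*} {x : ZMod n → α}
    (hx : Function.Periodic x 2) {i j : ZMod n} (hij : i.val % 2 = j.val % 2) : x i = x j := by
  wlog hle : i.val ≤ j.val generalizing i j
  · exact (this hij.symm (by omega)).symm
  obtain ⟨k, hk⟩ : ∃ k, j.val = i.val + k * 2 := ⟨(j.val - i.val) / 2, by omega⟩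
  have hj : j = i + k • 2 := by
    rw [← ZMod.natCast_zmod_val j, hk, ← ZMod.natCast_zmod_val i]
    push_cast
    simp [nsmul_eq_mul]
  rw [hj, hx.nsmul k i]

section
open scoped Matrix.Norms.L2Operator

theorem Matrix.IsHermitian.abs_eigenvalues_le_one_of_mem_doublyStochastic {ι : Type*}
    [Fintype ι] [DecidableEq ι] {M : Matrix ι ι ℝ} (hH : M.IsHermitian)
    (hM : M ∈ doublyStochastic ℝ ι) (k : ι) : |hH.eigenvalues k| ≤ 1 := by
  have : Nonempty ι := ⟨k⟩
  exact (spectrum.norm_le_norm_of_mem (hH.eigenvalues_mem_spectrum_real k)).trans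
    (l2_opNorm_le_one_of_mem_doublyStochastic hM)

end

theorem Matrix.IsHermitian.exists_tendsto_sq_pow {𝕜 ι : Type*} [RCLike 𝕜] [Fintype ι]
    [DecidableEq ι] {A : Matrix ι ι 𝕜} (hA : A.IsHermitian) (h : ∀ k, |hA.eigenvalues k| ≤ 1) :
    ∃ P, Tendsto (fun m : ℕ => (A ^ 2) ^ m) atTop (𝓝 P) := by
  choose c hc using fun k => exists_tendsto_sq_pow_of_abs_le_one (h k)
  set U : Matrix ι ι 𝕜 := (hA.eigenvectorUnitary : Matrix ι ι 𝕜)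
  have hpow (m : ℕ) : (A ^ 2) ^ m =
      U * diagonal (RCLike.ofReal ∘ fun k => (hA.eigenvalues k ^ 2) ^ m) * star U := by
    conv_lhs => rw [hA.spectral_theorem, ← map_pow, ← map_pow, Unitary.conjStarAlgAut_apply,
      diagonal_pow, diagonal_pow]
    congr 3
    ext k
    simp
  have hcont : Continuous fun d : ι → ℝ => U * diagonal (RCLike.ofReal ∘ d) * star U := by
    fun_prop
  refine ⟨U * diagonal (RCLike.ofReal ∘ c) * star U, ?_⟩
  simpa only [hpow, Function.comp_def] using (hcont.tendsto c).comp (tendsto_pi_nhds.mpr hc)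

namespace ngonBR

variable {n : ℕ} [NeZero n]

theorem mulVec_apply (hn : 3 ≤ n) (w : ZMod n → ℝ) (i : ZMod n) :
    (ngonBR n *ᵥ w) i = (w (i + 1) + w (i - 1)) / 2 := by
  have hne : i + 1 ≠ i - 1 := fun h => by
    have h2 : ((2 : ℕ) : ZMod n) = 0 := by push_cast; linear_combination h
    have := Nat.le_of_dvd two_pos ((ZMod.natCast_eq_zero_iff 2 n).mp h2)
    omega
  have hrow : ngonBR n i = Pi.single (i + 1) (1 / 2) + Pi.single (i - 1) (1 / 2) := by
    ext j
    by_cases h₁ : j = i + 1 <;> by_cases h₂ : j = i - 1 <;> simp_all [ngonBR]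
  rw [mulVec, hrow, add_dotProduct, single_dotProduct, single_dotProduct]
  ring

theorem isHermitian : (ngonBR n).IsHermitian := by
  ext i j
  simp only [conjTranspose_apply, ngonBR, of_apply, star_trivial]
  congr 1
  apply propext
  constructor <;> rintro (rfl | rfl) <;> simp

theorem mem_doublyStochastic (hn : 3 ≤ n) : ngonBR n ∈ doublyStochastic ℝ (ZMod n) := by
  have hrow : ngonBR n *ᵥ 1 = 1 := funext fun i => by simp [mulVec_apply hn]
  refine _root_.mem_doublyStochastic.mpr ⟨fun i j => ?_, hrow, ?_⟩
  · simp only [ngonBR, of_apply]; split_ifs <;> norm_num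
  · rw [← isHermitian.eq, conjTranspose_eq_transpose_of_trivial, vecMul_transpose, hrow]

theorem periodic_two_of_sq_mulVec_eq (hn : 3 ≤ n) {x : ZMod n → ℝ}
    (hx : ngonBR n ^ 2 *ᵥ x = x) : Function.Periodic x 2 := by
  refine .of_add_add_sub_eq_two_mul (N := n) (NeZero.ne n) (by simp) fun i => ?_
  have := congrFun hx i
  rw [sq, ← mulVec_mulVec, mulVec_apply hn, mulVec_apply hn, mulVec_apply hn] at this
  ring_nf at this ⊢
  linarith

end ngonBR

theorem stmt_17_general (n : ℕ) [NeZero n] (hn : 4 ≤ n) (v : ZMod n → ℝ) :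
    ∃ L₀ L₁ : ZMod n → ℝ,
      Filter.Tendsto (fun m : ℕ => ((ngonBR n) ^ (2 * m)) *ᵥ v) Filter.atTop (nhds L₀) ∧
      Filter.Tendsto (fun m : ℕ => ((ngonBR n) ^ (2 * m + 1)) *ᵥ v) Filter.atTop (nhds L₁) ∧
      (∀ i j : ZMod n, i.val % 2 = j.val % 2 → L₀ i = L₀ j) ∧
      (∀ i j : ZMod n, i.val % 2 = j.val % 2 → L₁ i = L₁ j) := by
  have hn3 : 3 ≤ n := by omega
  obtain ⟨P, hP⟩ := IsHermitian.exists_tendsto_sq_pow ngonBR.isHermitian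
    (IsHermitian.abs_eigenvalues_le_one_of_mem_doublyStochastic ngonBR.isHermitian
      (ngonBR.mem_doublyStochastic hn3))
  have hfix : ngonBR n ^ 2 * P = P := mul_eq_of_tendsto_pow hP
  have heven : Tendsto (fun m : ℕ => ngonBR n ^ (2 * m) *ᵥ v) atTop (𝓝 (P *ᵥ v)) := by
    simpa only [pow_mul, Function.comp_def, id] using
      ((continuous_id.matrix_mulVec continuous_const).tendsto P).comp hP
  have hodd : Tendsto (fun m : ℕ => ngonBR n ^ (2 * m + 1) *ᵥ v) atTop
      (𝓝 (ngonBR n *ᵥ P *ᵥ v)) := by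
    simpa only [pow_succ', ← mulVec_mulVec, Function.comp_def, id] using
      ((continuous_const.matrix_mulVec continuous_id).tendsto _).comp heven
  refine ⟨_, _, heven, hodd, fun i j => ZMod.eq_of_periodic_two ?_,
    fun i j => ZMod.eq_of_periodic_two ?_⟩
  · exact ngonBR.periodic_two_of_sq_mulVec_eq hn3 (by rw [mulVec_mulVec, hfix])
  · refine ngonBR.periodic_two_of_sq_mulVec_eq hn3 ?_
    rw [mulVec_mulVec, mulVec_mulVec, ← pow_succ, pow_succ', mul_assoc, hfix, ← mulVec_mulVec]

/-- For even n, the even and odd subsequences of B^m·v each converge, and each limit is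
constant on even indices and constant on odd indices. -/
theorem stmt_17 (n : ℕ) [NeZero n] (hn : 4 ≤ n) (heven : Even n) (v : ZMod n → ℝ) :
    ∃ L₀ L₁ : ZMod n → ℝ,
      Filter.Tendsto (fun m : ℕ => ((ngonBR n) ^ (2 * m)) *ᵥ v) Filter.atTop (nhds L₀) ∧
      Filter.Tendsto (fun m : ℕ => ((ngonBR n) ^ (2 * m + 1)) *ᵥ v) Filter.atTop (nhds L₁) ∧
      (∀ i j : ZMod n, i.val % 2 = j.val % 2 → L₀ i = L₀ j) ∧
      (∀ i j : ZMod n, i.val % 2 = j.val % 2 → L₁ i = L₁ j) :=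
  stmt_17_general n hn v
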